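/- For a pure bipartite state, MID equals the entanglement entropy: Q(|ψ⟩⟨ψ|) = I(ρ) - I(Π(ρ)) = S(ρ_C), where Π is the dephasing in the Schmidt (eigen)bases of the reduced states. -/

import Mathlib

open Matrix Kronecker

/-- Partial trace over the first tensor factor (the `C` register). -/
noncomputable def ptrFst {a b : Type*} [Fintype a] (M : Matrix (a × b) (a × b) ℂ) :
    Matrix b b ℂ := fun i j => ∑ c, M (c, i) (c, j)

/-- Partial trace over the second tensor factor (the `P` register). -/
noncomputable def ptrSnd {a b : Type*} [Fintype b] (M : Matrix (a × b) (a × b) ℂ) :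
    Matrix a a ℂ := fun i j => ∑ p, M (i, p) (j, p)

/-- Von Neumann entropy of a (Hermitian) matrix, via its eigenvalues. -/
noncomputable def vnEntropy {n : Type*} [Fintype n] [DecidableEq n]
    (ρ : Matrix n n ℂ) : ℝ :=
  if h : ρ.IsHermitian then -∑ i, h.eigenvalues i * Real.log (h.eigenvalues i) else 0

/-- Quantum mutual information `I(σ) = S(σ_C) + S(σ_P) - S(σ)`. -/
noncomputable def mutualInfo {C P : Type*} [Fintype C] [Fintype P]
    [DecidableEq C] [DecidableEq P] (σ : Matrix (C × P) (C × P) ℂ) : ℝ :=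
  vnEntropy (ptrSnd σ) + vnEntropy (ptrFst σ) - vnEntropy σ


/-! The reduced states of `ρ = |ψ⟩⟨ψ|` are `∑ λᵢ |aᵢ⟩⟨aᵢ|` and `∑ λᵢ |bᵢ⟩⟨bᵢ|`, and dephasing in
the product basis `aᵢ ⊗ bⱼ` removes every off-diagonal term, leaving
`Π(ρ) = ∑ λᵢ |aᵢ ⊗ bᵢ⟩⟨aᵢ ⊗ bᵢ|`, which has the same reduced states as `ρ`. Hence
`I(ρ) - I(Π(ρ)) = S(Π(ρ)) - S(ρ)`.

A matrix `∑ dᵢ |wᵢ⟩⟨wᵢ|` with orthonormal `wᵢ` is `W D W*` with `W* W = 1`. As `AB` and `BA` have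
the same characteristic polynomial up to a power of `X`, its spectrum is that of `D` padded with
zeros, and since `0 log 0 = 0` its entropy is `-∑ dᵢ log dᵢ`. This gives
`S(Π(ρ)) = S(ρ_C) = -∑ λᵢ log λᵢ` and `S(ρ) = 0`. -/

open Polynomial

section Spectral

variable {n ι : Type*}

theorem Matrix.sum_smul_vecMulVec_eq_mul_diagonal_mul [Fintype ι] [DecidableEq ι] {R : Type*}
    [CommSemiring R] [StarRing R] (w : ι → n → R) (d : ι → R) :
    ∑ i, d i • vecMulVec (w i) (star (w i)) = (of w)ᵀ * diagonal d * (of w)ᵀᴴ := by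
  ext x y
  rw [mul_apply]
  simp only [Matrix.sum_apply, Matrix.smul_apply, vecMulVec_apply, mul_diagonal,
    conjTranspose_apply, transpose_apply, of_apply, Pi.star_apply, smul_eq_mul]
  exact Finset.sum_congr rfl fun i _ => by ring

theorem Matrix.charpoly_sum_smul_vecMulVec [Fintype n] [DecidableEq n] [Fintype ι] [DecidableEq ι]
    {R : Type*} [CommRing R] [StarRing R] (w : ι → n → R)
    (hw : ∀ i j, star (w i) ⬝ᵥ w j = if i = j then 1 else 0) (d : ι → R) :
    X ^ Fintype.card ι * (∑ i, d i • vecMulVec (w i) (star (w i))).charpoly =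
      X ^ Fintype.card n * ∏ i, (X - C (d i)) := by
  have hW : (of w)ᵀᴴ * (of w)ᵀ = 1 := by
    ext i j
    simpa [mul_apply, one_apply, dotProduct] using hw i j
  rw [sum_smul_vecMulVec_eq_mul_diagonal_mul, Matrix.mul_assoc, charpoly_mul_comm',
    Matrix.mul_assoc, hW, mul_one, charpoly_diagonal]

theorem Matrix.IsHermitian.sum_comp_eigenvalues_eq [Fintype n] [DecidableEq n] [Fintype ι]
    {𝕜 : Type*} [RCLike 𝕜] {M : Matrix n n 𝕜} (hM : M.IsHermitian) (d : ι → ℝ)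
    (h : X ^ Fintype.card ι * M.charpoly = X ^ Fintype.card n * ∏ i, (X - C (d i : 𝕜)))
    {g : ℝ → ℝ} (hg : g 0 = 0) : ∑ i, g (hM.eigenvalues i) = ∑ i, g (d i) := by
  have hne : X ^ Fintype.card ι * M.charpoly ≠ 0 := ((monic_X_pow _).mul M.charpoly_monic).ne_zero
  have hroots := congrArg (fun p : 𝕜[X] => (p.roots.map (g ∘ RCLike.re)).sum) h
  rw [roots_mul hne, roots_mul (h ▸ hne), roots_X_pow, roots_X_pow,
    hM.roots_charpoly_eq_eigenvalues, roots_prod] at hroots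
  · simpa [hg, Multiset.map_nsmul, Multiset.nsmul_singleton, Function.comp_def] using hroots
  · exact Finset.prod_ne_zero_iff.mpr fun i _ => X_sub_C_ne_zero _

theorem vnEntropy_sum_smul_vecMulVec [Fintype n] [DecidableEq n] [Fintype ι] [DecidableEq ι]
    (w : ι → n → ℂ) (hw : ∀ i j, star (w i) ⬝ᵥ w j = if i = j then 1 else 0) (d : ι → ℝ) :
    vnEntropy (∑ i, (d i : ℂ) • vecMulVec (w i) (star (w i))) = -∑ i, d i * Real.log (d i) := by
  have hM : (∑ i, (d i : ℂ) • vecMulVec (w i) (star (w i))).IsHermitian := by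
    rw [sum_smul_vecMulVec_eq_mul_diagonal_mul]
    refine isHermitian_mul_mul_conjTranspose _ (isHermitian_diagonal_of_self_adjoint _ ?_)
    ext i
    simp
  rw [vnEntropy, dif_pos hM, hM.sum_comp_eigenvalues_eq d (charpoly_sum_smul_vecMulVec w hw _)
    (g := fun t => t * Real.log t) (by simp)]

theorem vnEntropy_vecMulVec_star_self [Fintype n] [DecidableEq n] {ψ : n → ℂ}
    (hψ : star ψ ⬝ᵥ ψ = 1) : vnEntropy (vecMulVec ψ (star ψ)) = 0 := by
  simpa using vnEntropy_sum_smul_vecMulVec (fun _ : Unit => ψ) (by simpa using hψ) 1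

end Spectral

theorem Matrix.vecMulVec_mul_vecMulVec_mul_vecMulVec {R n : Type*} [CommSemiring R] [Fintype n]
    (u v x y : n → R) :
    vecMulVec u v * vecMulVec x y * vecMulVec u v = ((v ⬝ᵥ x) * (y ⬝ᵥ u)) • vecMulVec u v := by
  rw [vecMulVec_mul_vecMulVec, vecMulVec_mul_vecMulVec, smul_dotProduct, smul_eq_mul,
    vecMulVec_smul]

section PartialTrace

variable {C P : Type*}

def kronVec {R : Type*} [Mul R] (u : C → R) (v : P → R) : C × P → R :=
  fun cp => u cp.1 * v cp.2

theorem star_kronVec {R : Type*} [CommSemiring R] [StarRing R] (u : C → R) (v : P → R) :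
    star (kronVec u v) = kronVec (star u) (star v) := by
  ext cp
  simp [kronVec]

theorem kronVec_dotProduct_kronVec {R : Type*} [CommSemiring R] [Fintype C] [Fintype P]
    (u u' : C → R) (v v' : P → R) :
    kronVec u v ⬝ᵥ kronVec u' v' = (u ⬝ᵥ u') * (v ⬝ᵥ v') := by
  simp only [dotProduct, kronVec, Fintype.sum_prod_type, Finset.sum_mul_sum]
  exact Finset.sum_congr rfl fun _ _ => Finset.sum_congr rfl fun _ _ => by ring

theorem vecMulVec_kronVec {R : Type*} [CommSemiring R] (u u' : C → R) (v v' : P → R) :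
    vecMulVec (kronVec u v) (kronVec u' v') = vecMulVec u u' ⊗ₖ vecMulVec v v' := by
  ext ⟨c, p⟩ ⟨c', p'⟩
  simp [kronVec, vecMulVec_apply, mul_mul_mul_comm]

theorem ptrSnd_sum [Fintype P] {κ : Type*} (s : Finset κ) (M : κ → Matrix (C × P) (C × P) ℂ) :
    ptrSnd (∑ k ∈ s, M k) = ∑ k ∈ s, ptrSnd (M k) := by
  ext
  simp only [ptrSnd, Matrix.sum_apply]
  exact Finset.sum_comm

theorem ptrFst_sum [Fintype C] {κ : Type*} (s : Finset κ) (M : κ → Matrix (C × P) (C × P) ℂ) :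
    ptrFst (∑ k ∈ s, M k) = ∑ k ∈ s, ptrFst (M k) := by
  ext
  simp only [ptrFst, Matrix.sum_apply]
  exact Finset.sum_comm

theorem ptrSnd_smul [Fintype P] (z : ℂ) (M : Matrix (C × P) (C × P) ℂ) :
    ptrSnd (z • M) = z • ptrSnd M := by
  ext
  simp [ptrSnd, Finset.mul_sum]

theorem ptrFst_smul [Fintype C] (z : ℂ) (M : Matrix (C × P) (C × P) ℂ) :
    ptrFst (z • M) = z • ptrFst M := by
  ext
  simp [ptrFst, Finset.mul_sum]

theorem ptrSnd_kronecker [Fintype P] (A : Matrix C C ℂ) (B : Matrix P P ℂ) :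
    ptrSnd (A ⊗ₖ B) = B.trace • A := by
  ext
  simp only [ptrSnd, kroneckerMap_apply, Matrix.smul_apply, trace, diag_apply, smul_eq_mul,
    Finset.sum_mul]
  exact Finset.sum_congr rfl fun _ _ => mul_comm _ _

theorem ptrFst_kronecker [Fintype C] (A : Matrix C C ℂ) (B : Matrix P P ℂ) :
    ptrFst (A ⊗ₖ B) = A.trace • B := by
  ext
  simp [ptrFst, trace, Finset.sum_mul]

end PartialTrace

section Schmidt

variable {C P ι : Type*} [Fintype ι] {a : ι → C → ℂ} {b : ι → P → ℂ}

def schmidtVec (s : ι → ℝ) (a : ι → C → ℂ) (b : ι → P → ℂ) : C × P → ℂ :=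
  ∑ i, (s i : ℂ) • kronVec (a i) (b i)

def dephase [Fintype C] [Fintype P] (a : ι → C → ℂ) (b : ι → P → ℂ)
    (M : Matrix (C × P) (C × P) ℂ) : Matrix (C × P) (C × P) ℂ :=
  ∑ i, ∑ j, (vecMulVec (a i) (star (a i)) ⊗ₖ vecMulVec (b j) (star (b j))) * M *
    (vecMulVec (a i) (star (a i)) ⊗ₖ vecMulVec (b j) (star (b j)))

theorem vecMulVec_schmidtVec (s : ι → ℝ) :
    vecMulVec (schmidtVec s a b) (star (schmidtVec s a b)) = ∑ i, ∑ j,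
      ((s i * s j : ℝ) : ℂ) • (vecMulVec (a i) (star (a j)) ⊗ₖ vecMulVec (b i) (star (b j))) := by
  simp only [schmidtVec, star_sum, star_smul]
  ext x y
  simp only [Matrix.sum_apply, Matrix.smul_apply, vecMulVec_apply, kroneckerMap_apply,
    Finset.sum_apply, Finset.sum_mul_sum, Pi.smul_apply, Pi.star_apply, kronVec, smul_eq_mul,
    star_mul', RCLike.star_def, Complex.conj_ofReal, Complex.ofReal_mul]
  exact Finset.sum_congr rfl fun _ _ => Finset.sum_congr rfl fun _ _ => by ring

theorem ptrSnd_vecMulVec_schmidtVec [Fintype P] [DecidableEq ι]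
    (hb : ∀ i j, star (b i) ⬝ᵥ b j = if i = j then 1 else 0) (s : ι → ℝ) :
    ptrSnd (vecMulVec (schmidtVec s a b) (star (schmidtVec s a b))) =
      ∑ i, ((s i ^ 2 : ℝ) : ℂ) • vecMulVec (a i) (star (a i)) := by
  simp [vecMulVec_schmidtVec, ptrSnd_sum, ptrSnd_smul, ptrSnd_kronecker, trace_vecMulVec,
    dotProduct_comm (b _), hb, sq]

theorem ptrFst_vecMulVec_schmidtVec [Fintype C] [DecidableEq ι]
    (ha : ∀ i j, star (a i) ⬝ᵥ a j = if i = j then 1 else 0) (s : ι → ℝ) :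
    ptrFst (vecMulVec (schmidtVec s a b) (star (schmidtVec s a b))) =
      ∑ i, ((s i ^ 2 : ℝ) : ℂ) • vecMulVec (b i) (star (b i)) := by
  simp [vecMulVec_schmidtVec, ptrFst_sum, ptrFst_smul, ptrFst_kronecker, trace_vecMulVec,
    dotProduct_comm (a _), ha, sq]

theorem star_kronVec_dotProduct_schmidtVec [Fintype C] [Fintype P] [DecidableEq ι]
    (ha : ∀ i j, star (a i) ⬝ᵥ a j = if i = j then 1 else 0)
    (hb : ∀ i j, star (b i) ⬝ᵥ b j = if i = j then 1 else 0) (s : ι → ℝ) (i j : ι) :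
    star (kronVec (a i) (b j)) ⬝ᵥ schmidtVec s a b = if i = j then (s i : ℂ) else 0 := by
  rcases eq_or_ne i j with rfl | hij <;>
    simp [*, schmidtVec, dotProduct_sum, star_kronVec, kronVec_dotProduct_kronVec]

theorem star_schmidtVec_dotProduct_self [Fintype C] [Fintype P] [DecidableEq ι]
    (ha : ∀ i j, star (a i) ⬝ᵥ a j = if i = j then 1 else 0)
    (hb : ∀ i j, star (b i) ⬝ᵥ b j = if i = j then 1 else 0) (s : ι → ℝ) :
    star (schmidtVec s a b) ⬝ᵥ schmidtVec s a b = ∑ i, ((s i ^ 2 : ℝ) : ℂ) := by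
  conv_lhs => enter [1]; rw [schmidtVec]
  simp [star_sum, sum_dotProduct, star_kronVec_dotProduct_schmidtVec ha hb, sq]

theorem dephase_vecMulVec_schmidtVec [Fintype C] [Fintype P] [DecidableEq ι]
    (ha : ∀ i j, star (a i) ⬝ᵥ a j = if i = j then 1 else 0)
    (hb : ∀ i j, star (b i) ⬝ᵥ b j = if i = j then 1 else 0) (s : ι → ℝ) :
    dephase a b (vecMulVec (schmidtVec s a b) (star (schmidtVec s a b))) =
      ∑ i, ((s i ^ 2 : ℝ) : ℂ) • vecMulVec (kronVec (a i) (b i)) (star (kronVec (a i) (b i))) := by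
  simp only [dephase, ← vecMulVec_kronVec, ← star_kronVec, vecMulVec_mul_vecMulVec_mul_vecMulVec,
    star_dotProduct (schmidtVec s a b), star_kronVec_dotProduct_schmidtVec ha hb]
  simp [apply_ite, sq, Finset.sum_ite_eq]

theorem ptrSnd_sum_smul_vecMulVec_kronVec [Fintype P] (hb : ∀ i, star (b i) ⬝ᵥ b i = 1)
    (d : ι → ℂ) :
    ptrSnd (∑ i, d i • vecMulVec (kronVec (a i) (b i)) (star (kronVec (a i) (b i)))) =
      ∑ i, d i • vecMulVec (a i) (star (a i)) := by
  simp [ptrSnd_sum, ptrSnd_smul, star_kronVec, vecMulVec_kronVec, ptrSnd_kronecker,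
    trace_vecMulVec, dotProduct_comm (b _), hb]

theorem ptrFst_sum_smul_vecMulVec_kronVec [Fintype C] (ha : ∀ i, star (a i) ⬝ᵥ a i = 1)
    (d : ι → ℂ) :
    ptrFst (∑ i, d i • vecMulVec (kronVec (a i) (b i)) (star (kronVec (a i) (b i)))) =
      ∑ i, d i • vecMulVec (b i) (star (b i)) := by
  simp [ptrFst_sum, ptrFst_smul, star_kronVec, vecMulVec_kronVec, ptrFst_kronecker,
    trace_vecMulVec, dotProduct_comm (a _), ha]

theorem mutualInfo_sub_mutualInfo_dephase_schmidtVec [Fintype C] [Fintype P] [DecidableEq C]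
    [DecidableEq P] [DecidableEq ι]
    (ha : ∀ i j, star (a i) ⬝ᵥ a j = if i = j then 1 else 0)
    (hb : ∀ i j, star (b i) ⬝ᵥ b j = if i = j then 1 else 0) {s : ι → ℝ}
    (hs : ∑ i, s i ^ 2 = 1) :
    mutualInfo (vecMulVec (schmidtVec s a b) (star (schmidtVec s a b))) -
        mutualInfo (dephase a b (vecMulVec (schmidtVec s a b) (star (schmidtVec s a b)))) =
      vnEntropy (ptrSnd (vecMulVec (schmidtVec s a b) (star (schmidtVec s a b)))) := by
  have hw : ∀ i j, star (kronVec (a i) (b i)) ⬝ᵥ kronVec (a j) (b j) =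
      if i = j then 1 else 0 := by
    simp [star_kronVec, kronVec_dotProduct_kronVec, ha, hb]
  have hnorm : star (schmidtVec s a b) ⬝ᵥ schmidtVec s a b = 1 := by
    rw [star_schmidtVec_dotProduct_self ha hb]
    exact_mod_cast hs
  rw [mutualInfo, mutualInfo, vnEntropy_vecMulVec_star_self hnorm,
    dephase_vecMulVec_schmidtVec ha hb, vnEntropy_sum_smul_vecMulVec _ hw,
    ptrSnd_sum_smul_vecMulVec_kronVec fun i => by simpa using hb i i,
    ptrFst_sum_smul_vecMulVec_kronVec fun i => by simpa using ha i i,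
    ptrSnd_vecMulVec_schmidtVec hb, ptrFst_vecMulVec_schmidtVec ha,
    vnEntropy_sum_smul_vecMulVec _ ha]
  ring

end Schmidt

theorem mid_equals_entanglement_for_pure_states_general
    {C P ι : Type*} [Fintype C] [Fintype P] [Fintype ι]
    [DecidableEq C] [DecidableEq P] [DecidableEq ι]
    (lam : ι → ℝ) (hpos : ∀ i, 0 < lam i)
    (hsum : ∑ i, lam i = 1)
    (a : ι → C → ℂ) (b : ι → P → ℂ)
    -- orthonormality of the Schmidt bases
    (ha : ∀ i i', ∑ c, (starRingEnd ℂ) (a i c) * a i' c = if i = i' then 1 else 0)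
    (hb : ∀ i i', ∑ p, (starRingEnd ℂ) (b i p) * b i' p = if i = i' then 1 else 0)
    (ψ : C × P → ℂ)
    (hψ : ψ = fun cp => ∑ i, (Real.sqrt (lam i) : ℂ) * a i cp.1 * b i cp.2)
    (ρ : Matrix (C × P) (C × P) ℂ) (hρ : ρ = Matrix.vecMulVec ψ (star ψ))
    (dρ : Matrix (C × P) (C × P) ℂ)
    (hdρ : dρ = ∑ i, ∑ i',
      ((Matrix.vecMulVec (a i) (star (a i))) ⊗ₖ (Matrix.vecMulVec (b i') (star (b i')))) * ρ *
      ((Matrix.vecMulVec (a i) (star (a i))) ⊗ₖ (Matrix.vecMulVec (b i') (star (b i'))))) :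
    mutualInfo ρ - mutualInfo dρ = vnEntropy (ptrSnd ρ) := by
  have hψs : ψ = schmidtVec (fun i => √(lam i)) a b := by
    rw [hψ]
    ext cp
    simp [schmidtVec, kronVec, Finset.sum_apply, mul_assoc]
  have hs : ∑ i, √(lam i) ^ 2 = 1 :=
    (Finset.sum_congr rfl fun i _ => Real.sq_sqrt (hpos i).le).trans hsum
  rw [hdρ, hρ, hψs]
  exact mutualInfo_sub_mutualInfo_dephase_schmidtVec ha hb hs

/-- For a pure bipartite state `ρ = |ψ⟩⟨ψ|` with Schmidt
decomposition `∑_i √λ_i |a_i⟩⊗|b_i⟩` (distinct nonzero Schmidt coefficients),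
MID equals the entanglement entropy: `Q(ρ) = I(ρ) - I(Π(ρ)) = S(ρ_C)`,
where `Π` dephases in the Schmidt (eigen)bases of the reduced states. -/
theorem mid_equals_entanglement_for_pure_states
    {C P ι : Type*} [Fintype C] [Fintype P] [Fintype ι]
    [DecidableEq C] [DecidableEq P] [DecidableEq ι]
    (lam : ι → ℝ) (hpos : ∀ i, 0 < lam i) (hdist : Function.Injective lam)
    (hsum : ∑ i, lam i = 1)
    (a : ι → C → ℂ) (b : ι → P → ℂ)
    -- orthonormality of the Schmidt bases
    (ha : ∀ i i', ∑ c, (starRingEnd ℂ) (a i c) * a i' c = if i = i' then 1 else 0)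
    (hb : ∀ i i', ∑ p, (starRingEnd ℂ) (b i p) * b i' p = if i = i' then 1 else 0)
    -- completeness of the Schmidt bases
    (hac : ∀ c c', ∑ i, a i c * (starRingEnd ℂ) (a i c') = if c = c' then 1 else 0)
    (hbc : ∀ p p', ∑ i, b i p * (starRingEnd ℂ) (b i p') = if p = p' then 1 else 0)
    (ψ : C × P → ℂ)
    (hψ : ψ = fun cp => ∑ i, (Real.sqrt (lam i) : ℂ) * a i cp.1 * b i cp.2)
    (ρ : Matrix (C × P) (C × P) ℂ) (hρ : ρ = Matrix.vecMulVec ψ (star ψ))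
    (dρ : Matrix (C × P) (C × P) ℂ)
    (hdρ : dρ = ∑ i, ∑ i',
      ((Matrix.vecMulVec (a i) (star (a i))) ⊗ₖ (Matrix.vecMulVec (b i') (star (b i')))) * ρ *
      ((Matrix.vecMulVec (a i) (star (a i))) ⊗ₖ (Matrix.vecMulVec (b i') (star (b i'))))) :
    mutualInfo ρ - mutualInfo dρ = vnEntropy (ptrSnd ρ) :=
  mid_equals_entanglement_for_pure_states_general lam hpos hsum a b ha hb ψ hψ ρ hρ dρ hdρ
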